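/- Let W₂ be the matrix v·diag((α+v+β+2(k+1))/(α+v-β), -(α-v+β+2(k+1))/(α-v-β)) (the leading coefficient W₂^{(k)} of W̃^{(α,β,v,k)}), and let A₁ᵏ be as in the Pearson equation. Then W₂^{(k)}A₁ᵏ - (A₁ᵏ)*W₂^{(k)} = (4v(α+β+2(k+1))/((α-v+β+2(k+1))(α+v+β+2(k+1)))) · [[0,1],[-1,0]], which is nonzero whenever v ≠ 0 and α+β+2(k+1) ≠ 0. -/
import Mathlib


open Matrix

noncomputable section

/-- Leading coefficient `W₂^{(k)}` of the polynomial part of `W^{(α,β,v,k)}`. -/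
def W2 (α β v : ℝ) (k : ℕ) : Matrix (Fin 2) (Fin 2) ℝ :=
  v • !![(α + v + β + 2 * ((k : ℝ) + 1)) / (α + v - β), 0;
         0, -((α - v + β + 2 * ((k : ℝ) + 1)) / (α - v - β))]

/-- Leading coefficient `A₂ᵏ` of `Φ^{(k)}`. -/
def A2 (α β v : ℝ) (k : ℕ) : Matrix (Fin 2) (Fin 2) ℝ :=
  !![-((α + v + β + 2 * ((k : ℝ) + 2)) / (α + v + β + 2 * ((k : ℝ) + 1))), 0;
     0, -((α - v + β + 2 * ((k : ℝ) + 2)) / (α - v + β + 2 * ((k : ℝ) + 1)))]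

/-- Coefficient `A₁ᵏ` of `Φ^{(k)}`. -/
def A1 (α β v : ℝ) (k : ℕ) : Matrix (Fin 2) (Fin 2) ℝ :=
  (2 / ((α - v + β + 2 * ((k : ℝ) + 1)) * (α + v + β + 2 * ((k : ℝ) + 1)))) •
    !![0, α + v - β; α - v - β, 0] - A2 α β v k

end

set_option maxHeartbeats 2000000 in
theorem stmt18 (α β v : ℝ) (k : ℕ) (hα : -((k : ℝ) + 1) < α) (hβ : -((k : ℝ) + 1) < β)
    (h1 : |α - β| < |v|) (h2 : |v| < α + β + 2 * ((k : ℝ) + 1)) :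
    W2 α β v k * A1 α β v k - (A1 α β v k)ᵀ * W2 α β v k =
        (4 * v * (α + β + 2 * ((k : ℝ) + 1)) /
            ((α - v + β + 2 * ((k : ℝ) + 1)) * (α + v + β + 2 * ((k : ℝ) + 1)))) •
          !![(0 : ℝ), 1; -1, 0] ∧
      (v ≠ 0 → α + β + 2 * ((k : ℝ) + 1) ≠ 0 →
        (4 * v * (α + β + 2 * ((k : ℝ) + 1)) /
            ((α - v + β + 2 * ((k : ℝ) + 1)) * (α + v + β + 2 * ((k : ℝ) + 1)))) •
          !![(0 : ℝ), 1; -1, 0] ≠ 0) := by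
  have hd1 : α - v + β + 2 * ((k : ℝ) + 1) ≠ 0 := by
    have := neg_abs_le v; have := le_abs_self v; nlinarith [abs_nonneg v]
  have hd2 : α + v + β + 2 * ((k : ℝ) + 1) ≠ 0 := by
    have := neg_abs_le v; have := le_abs_self v; nlinarith [abs_nonneg v]
  have hb1 : α + v - β ≠ 0 := by
    intro h
    have : |α - β| = |v| := by rw [show α - β = -v by linarith, abs_neg]
    linarith [h1, this.ge]
  have hb2 : α - v - β ≠ 0 := by
    intro h
    have : |α - β| = |v| := by rw [show α - β = v by linarith]
    linarith [h1, this.ge]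
  have hA1 : A1 α β v k =
      !![(α + v + β + 2 * ((k : ℝ) + 2)) / (α + v + β + 2 * ((k : ℝ) + 1)),
         2 * (α + v - β) / ((α - v + β + 2 * ((k : ℝ) + 1)) * (α + v + β + 2 * ((k : ℝ) + 1)));
         2 * (α - v - β) / ((α - v + β + 2 * ((k : ℝ) + 1)) * (α + v + β + 2 * ((k : ℝ) + 1))),
         (α - v + β + 2 * ((k : ℝ) + 2)) / (α - v + β + 2 * ((k : ℝ) + 1))] := by
    ext i j
    fin_cases i <;> fin_cases j <;>
      simp [A1, A2, Matrix.sub_apply, Matrix.smul_apply] <;> ring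
  have hW2 : W2 α β v k =
      !![v * ((α + v + β + 2 * ((k : ℝ) + 1)) / (α + v - β)), 0;
         0, v * (-((α - v + β + 2 * ((k : ℝ) + 1)) / (α - v - β)))] := by
    ext i j
    fin_cases i <;> fin_cases j <;> simp [W2, Matrix.smul_apply]
  have htr : ∀ a b c d : ℝ, !![a, b; c, d]ᵀ = !![a, c; b, d] := by
    intro a b c d
    ext i j
    fin_cases i <;> fin_cases j <;> rfl
  constructor
  · rw [hA1, hW2, htr, Matrix.mul_fin_two, Matrix.mul_fin_two]
    ext i j
    fin_cases i <;> fin_cases j <;>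
      simp [Matrix.sub_apply, Matrix.smul_apply] <;>
      field_simp <;> ring
  · intro hv hs h
    have h01 := congrFun (congrFun h 0) 1
    simp [Matrix.smul_apply] at h01
    have hnum : 4 * v * (α + β + 2 * ((k : ℝ) + 1)) ≠ 0 := by
      exact mul_ne_zero (mul_ne_zero (by norm_num) hv) hs
    rcases h01 with (h' | h') | h' | h'
    · exact hv h'
    · exact hs h'
    · exact hd1 h'
    · exact hd2 h'
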